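/- arXiv:2205.05527 — 3 statements merged into one kernel-verified Lean document; each statement's English description precedes it below -/
import Mathlib

section
/- Fix $\tilde S_{vv}, \tilde S_{zz}, \tilde S_{vz}, \tilde S_{zv} > 0$ and $p_v, p_z > 0$. Define $E_t(m) = \frac{p_v^2 m^2 \tilde S_{vv} + p_z^2 \tilde S_{zz}}{p_v^2 m^2 \tilde S_{vv} + p_z^2 \tilde S_{zz} + m p_z p_v(\tilde S_{vz}+\tilde S_{zv})}$ for real $m \ge 1$. Then $E_t(m)$ is minimized (over real $m > 0$) at $m^* = \frac{p_z}{p_v}\sqrt{\tilde S_{zz}/\tilde S_{vv}}$, and $E_t$ is not monotone in $m$ in general: it decreases for $m < m^*$ and increases for $m > m^*$. -/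
/-!
Write `a = p_v² S̃_vv`, `b = p_z² S̃_zz`, `c = p_z p_v (S̃_vz + S̃_zv)`. Dividing numerator and
denominator by `m`, `E(m) = g(m) / (g(m) + c)` with `g(m) = a m + b / m`, and `t ↦ t / (t + c)` is
increasing. Since `a m*² = b` and `g(y) - g(x) = (y - x) (a x y - b) / (x y)`, `g` decreases on
`(0, m*]` and increases on `[m*, ∞)`.
-/

open Set

section

variable {a b c s : ℝ}

lemma mul_add_div_sub_mul_add_div {x y : ℝ} (hx : x ≠ 0) (hy : y ≠ 0) :
    (a * y + b / y) - (a * x + b / x) = (y - x) * (a * (x * y) - b) / (x * y) := by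
  field_simp
  ring

lemma mapsTo_mul_add_div (ha : 0 < a) (hb : 0 ≤ b) :
    MapsTo (fun m : ℝ => a * m + b / m) (Ioi 0) (Ioi 0) := fun m (hm : 0 < m) => by
  simp only [mem_Ioi]
  positivity

lemma strictAntiOn_mul_add_div (ha : 0 < a) (hb : a * s ^ 2 = b) :
    StrictAntiOn (fun m : ℝ => a * m + b / m) (Ioc 0 s) := by
  intro x ⟨hx, _⟩ y ⟨hy, hys⟩ hxy
  have hprod : a * (x * y) < b := by rw [← hb]; gcongr; nlinarith
  have hdiff := mul_add_div_sub_mul_add_div (a := a) (b := b) hx.ne' hy.ne'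
  have hneg : (y - x) * (a * (x * y) - b) / (x * y) < 0 :=
    div_neg_of_neg_of_pos (mul_neg_of_pos_of_neg (sub_pos.2 hxy) (sub_neg.2 hprod))
      (by positivity)
  show a * y + b / y < a * x + b / x
  linarith

lemma strictMonoOn_mul_add_div (ha : 0 < a) (hs : 0 < s) (hb : a * s ^ 2 = b) :
    StrictMonoOn (fun m : ℝ => a * m + b / m) (Ici s) := by
  intro x (hsx : s ≤ x) y (hsy : s ≤ y) hxy
  have hx : 0 < x := hs.trans_le hsx
  have hy : 0 < y := hs.trans_le hsy
  have hprod : b < a * (x * y) := by rw [← hb]; gcongr; nlinarith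
  have hdiff := mul_add_div_sub_mul_add_div (a := a) (b := b) hx.ne' hy.ne'
  have hpos : 0 < (y - x) * (a * (x * y) - b) / (x * y) :=
    div_pos (mul_pos (sub_pos.2 hxy) (sub_pos.2 hprod)) (by positivity)
  show a * x + b / x < a * y + b / y
  linarith

lemma strictMonoOn_div_add_const (hc : 0 < c) :
    StrictMonoOn (fun t : ℝ => t / (t + c)) (Ioi 0) := by
  intro x (hx : 0 < x) y (hy : 0 < y) hxy
  simp only
  rw [div_lt_div_iff₀ (by positivity) (by positivity)]
  nlinarith

lemma eqOn_div_add_const_comp_mul_add_div :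
    EqOn ((fun t : ℝ => t / (t + c)) ∘ fun m : ℝ => a * m + b / m)
      (fun m => (a * m ^ 2 + b) / (a * m ^ 2 + b + c * m)) (Ioi 0) := by
  intro m (hm : 0 < m)
  have : m ≠ 0 := hm.ne'
  simp only [Function.comp]
  field_simp

lemma strictAntiOn_ratio (ha : 0 < a) (hb : a * s ^ 2 = b) (hc : 0 < c) :
    StrictAntiOn (fun m => (a * m ^ 2 + b) / (a * m ^ 2 + b + c * m)) (Ioc 0 s) :=
  ((strictMonoOn_div_add_const hc).comp_strictAntiOn (strictAntiOn_mul_add_div ha hb)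
    ((mapsTo_mul_add_div ha (hb ▸ by positivity)).mono_left Ioc_subset_Ioi_self)).congr
    (eqOn_div_add_const_comp_mul_add_div.mono Ioc_subset_Ioi_self)

lemma strictMonoOn_ratio (ha : 0 < a) (hs : 0 < s) (hb : a * s ^ 2 = b) (hc : 0 < c) :
    StrictMonoOn (fun m => (a * m ^ 2 + b) / (a * m ^ 2 + b + c * m)) (Ici s) :=
  ((strictMonoOn_div_add_const hc).comp (strictMonoOn_mul_add_div ha hs hb)
    ((mapsTo_mul_add_div ha (hb ▸ by positivity)).mono_left (Ici_subset_Ioi.2 hs))).congr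
    (eqOn_div_add_const_comp_mul_add_div.mono (Ici_subset_Ioi.2 hs))

end

lemma le_of_antitoneOn_Ioc_of_monotoneOn_Ici {α β : Type*} [LinearOrder α] [Preorder β]
    {f : α → β} {a s m : α} (hanti : AntitoneOn f (Ioc a s)) (hmono : MonotoneOn f (Ici s))
    (hm : a < m) : f s ≤ f m := by
  rcases le_total m s with hms | hsm
  · exact hanti ⟨hm, hms⟩ ⟨hm.trans_le hms, le_rfl⟩ hms
  · exact hmono self_mem_Ici hsm hsm

theorem qber_with_dark_counts_min (Svv Szz Svz Szv pv pz : ℝ)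
    (hSvv : 0 < Svv) (hSzz : 0 < Szz) (hSvz : 0 < Svz) (hSzv : 0 < Szv)
    (hpv : 0 < pv) (hpz : 0 < pz) :
    let E : ℝ → ℝ := fun m =>
      (pv ^ 2 * m ^ 2 * Svv + pz ^ 2 * Szz) /
        (pv ^ 2 * m ^ 2 * Svv + pz ^ 2 * Szz + m * pz * pv * (Svz + Szv))
    let mstar : ℝ := (pz / pv) * Real.sqrt (Szz / Svv)
    (∀ m : ℝ, 0 < m → E mstar ≤ E m) ∧
      StrictAntiOn E (Set.Ioc (0 : ℝ) mstar) ∧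
      StrictMonoOn E (Set.Ici mstar) := by
  intro E mstar
  have hE : E = fun m => (pv ^ 2 * Svv * m ^ 2 + pz ^ 2 * Szz) /
      (pv ^ 2 * Svv * m ^ 2 + pz ^ 2 * Szz + pz * pv * (Svz + Szv) * m) := by
    funext m
    simp only [E]
    ring
  have hmstar_pos : 0 < mstar := by
    have := Real.sqrt_pos.2 (div_pos hSzz hSvv)
    positivity
  have hmstar_sq : pv ^ 2 * Svv * mstar ^ 2 = pz ^ 2 * Szz := by
    simp only [mstar, mul_pow, div_pow, Real.sq_sqrt (div_pos hSzz hSvv).le]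
    field_simp
  have hc : 0 < pz * pv * (Svz + Szv) := by positivity
  have hanti := strictAntiOn_ratio (by positivity) hmstar_sq hc
  have hmono := strictMonoOn_ratio (by positivity) hmstar_pos hmstar_sq hc
  rw [hE]
  exact ⟨fun m hm => le_of_antitoneOn_Ioc_of_monotoneOn_Ici hanti.antitoneOn
    hmono.monotoneOn hm, hanti, hmono⟩
end

section
/- If $a \ge 0$, $b \ge 0$, $c > 0$, and $a m^2 \le b$ for a real $m \ge 1$ (dark counts sufficiently small), then $E(m) = \frac{am^2+b}{am^2+b+cm}$ is nonincreasing on the interval $[1, \sqrt{b/a}]$ (all of $[1,\infty)$ if $a = 0$). -/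
/-! Cross-multiplying, `E y ≤ E x` for `0 < x ≤ y` reduces to `c (y - x) (b - a x y) ≥ 0`, so
`E` decreases between any two points whose product is at most `b / a`; on `[1, √(b/a)]` this
holds for every pair. -/

section QBER

variable {a b c : ℝ}

theorem qber_le_qber_of_mul_le (ha : 0 ≤ a) (hb : 0 ≤ b) (hc : 0 < c) {x y : ℝ}
    (hx : 0 < x) (hxy : x ≤ y) (hab : a * (x * y) ≤ b) :
    (a * y ^ 2 + b) / (a * y ^ 2 + b + c * y) ≤ (a * x ^ 2 + b) / (a * x ^ 2 + b + c * x) := by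
  have hy : 0 < y := hx.trans_le hxy
  rw [div_le_div_iff₀ (by positivity) (by positivity)]
  nlinarith [mul_nonneg (mul_nonneg hc.le (sub_nonneg.2 hxy)) (sub_nonneg.2 hab)]

theorem antitoneOn_qber (ha : 0 ≤ a) (hb : 0 ≤ b) (hc : 0 < c) {s : Set ℝ}
    (hs : ∀ x ∈ s, 0 < x) (hsb : ∀ x ∈ s, ∀ y ∈ s, a * (x * y) ≤ b) :
    AntitoneOn (fun m => (a * m ^ 2 + b) / (a * m ^ 2 + b + c * m)) s :=
  fun x hx y hy hxy => qber_le_qber_of_mul_le ha hb hc (hs x hx) hxy (hsb x hx y hy)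

end QBER

theorem mul_mul_le_of_le_sqrt_div {a b x y : ℝ} (ha : 0 < a) (hb : 0 ≤ b) (hy : 0 ≤ y)
    (hxs : x ≤ √(b / a)) (hys : y ≤ √(b / a)) : a * (x * y) ≤ b := by
  have hxy : x * y ≤ b / a :=
    calc x * y ≤ √(b / a) * √(b / a) := mul_le_mul hxs hys hy (Real.sqrt_nonneg _)
      _ = b / a := Real.mul_self_sqrt (div_nonneg hb ha.le)
  rwa [le_div_iff₀' ha] at hxy

theorem qber_nonincreasing_small_dark_general (a b c : ℝ)
    (hb : 0 ≤ b) (hc : 0 < c) :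
    let E : ℝ → ℝ := fun m => (a * m ^ 2 + b) / (a * m ^ 2 + b + c * m)
    (a = 0 → AntitoneOn E (Set.Ici (1 : ℝ))) ∧
      (0 < a → AntitoneOn E (Set.Icc (1 : ℝ) (Real.sqrt (b / a)))) := by
  refine ⟨?_, fun ha => ?_⟩
  · rintro rfl
    exact antitoneOn_qber le_rfl hb hc (fun x hx => zero_lt_one.trans_le hx)
      (fun _ _ _ _ => by simpa using hb)
  · exact antitoneOn_qber ha.le hb hc (fun x hx => zero_lt_one.trans_le hx.1)
      (fun x hx y hy => mul_mul_le_of_le_sqrt_div ha hb (zero_le_one.trans hy.1)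
        hx.2 hy.2)

theorem qber_nonincreasing_small_dark (a b c : ℝ)
    (ha : 0 ≤ a) (hb : 0 ≤ b) (hc : 0 < c) :
    let E : ℝ → ℝ := fun m => (a * m ^ 2 + b) / (a * m ^ 2 + b + c * m)
    (a = 0 → AntitoneOn E (Set.Ici (1 : ℝ))) ∧
      (0 < a → AntitoneOn E (Set.Icc (1 : ℝ) (Real.sqrt (b / a)))) :=
  qber_nonincreasing_small_dark_general a b c hb hc
end

section
/- Let $\mu_y > \mu_x > 0$ and suppose $\langle s_1 \rangle = \frac{\mu_y^2 e^{\mu_x}(\langle S_{vx}\rangle + \langle S_{xv}\rangle) - \mu_x^2 e^{\mu_y}(\langle S_{vy}\rangle + \langle S_{yv}\rangle) - 2(\mu_y^2-\mu_x^2)\langle S_{vv}\rangle}{2\mu_x\mu_y(\mu_y-\mu_x)}$. If each counting rate $\langle S_{v\ell}\rangle$ (and $\langle S_{\ell v}\rangle$) is generated by a Poissonian photon-number mixture, i.e., $\langle S_{v\ell}\rangle = \sum_{k\ge 0} e^{-\mu_\ell}\frac{\mu_\ell^k}{k!} s_k$ for a common sequence $s_k \in [0,1]$, then $\langle s_1 \rangle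 \le s_1$, i.e., the decoy-state expression is a valid lower bound for the single-photon counting rate. -/
/-!
Write `Q(μ) = ∑ₖ μᵏ/k! · sₖ`, so that each decoy counting rate is `e^{-μ} Q(μ)`. In
`μ_y² Q(μ_x) - μ_x² Q(μ_y)` the photon-number terms `k ≥ 2` have coefficient
`(μ_y² μ_xᵏ - μ_x² μ_yᵏ)/k! ≤ 0` because `μ_x ≤ μ_y`, while the terms `k = 0, 1` are
`(μ_y² - μ_x²) s₀` and `μ_x μ_y (μ_y - μ_x) s₁`. Dropping the nonpositive tail and solving for `s₁`
gives the bound.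
-/

open Nat

lemma summable_pow_div_factorial_mul_of_abs_le {s : ℕ → ℝ} {C : ℝ} (hs : ∀ k, |s k| ≤ C)
    (μ : ℝ) : Summable fun k : ℕ => μ ^ k / k ! * s k := by
  refine Summable.of_norm_bounded ((Real.summable_pow_div_factorial |μ|).mul_right C) fun k => ?_
  rw [Real.norm_eq_abs, abs_mul, abs_div, abs_pow, Nat.abs_cast]
  exact mul_le_mul_of_nonneg_left (hs k) (by positivity)

lemma exp_mul_tsum_exp_neg_mul_pow_div_factorial_mul (μ : ℝ) (s : ℕ → ℝ) :
    Real.exp μ * ∑' k : ℕ, Real.exp (-μ) * μ ^ k / k ! * s k = ∑' k : ℕ, μ ^ k / k ! * s k := by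
  simp_rw [mul_div_assoc, mul_assoc, tsum_mul_left, ← mul_assoc, ← Real.exp_add, add_neg_cancel,
    Real.exp_zero, one_mul]

lemma sq_mul_pow_le_sq_mul_pow {x y : ℝ} (hx : 0 ≤ x) (hxy : x ≤ y) {k : ℕ} (hk : 2 ≤ k) :
    y ^ 2 * x ^ k ≤ x ^ 2 * y ^ k := by
  obtain ⟨n, rfl⟩ := Nat.exists_eq_add_of_le hk
  calc y ^ 2 * x ^ (2 + n) = x ^ 2 * y ^ 2 * x ^ n := by ring
    _ ≤ x ^ 2 * y ^ 2 * y ^ n := by gcongr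
    _ = x ^ 2 * y ^ (2 + n) := by ring

lemma sq_mul_tsum_sub_sq_mul_tsum_le {x y : ℝ} (hx : 0 ≤ x) (hxy : x ≤ y) {s : ℕ → ℝ}
    (hs : ∀ k, 0 ≤ s k) (hsx : Summable fun k : ℕ => x ^ k / k ! * s k)
    (hsy : Summable fun k : ℕ => y ^ k / k ! * s k) :
    y ^ 2 * ∑' k : ℕ, x ^ k / k ! * s k - x ^ 2 * ∑' k : ℕ, y ^ k / k ! * s k
      ≤ (y ^ 2 - x ^ 2) * s 0 + x * y * (y - x) * s 1 := by
  set g : ℕ → ℝ := fun k => (y ^ 2 * x ^ k - x ^ 2 * y ^ k) / k ! * s k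
  have hg : Summable g := by
    refine ((hsx.mul_left (y ^ 2)).sub (hsy.mul_left (x ^ 2))).congr fun k => ?_
    simp only [g]
    ring
  have hsplit : y ^ 2 * ∑' k : ℕ, x ^ k / k ! * s k - x ^ 2 * ∑' k : ℕ, y ^ k / k ! * s k
      = ∑ k ∈ Finset.range 2, g k + ∑' k : ℕ, g (k + 2) := by
    rw [hg.sum_add_tsum_nat_add, ← tsum_mul_left, ← tsum_mul_left,
      ← (hsx.mul_left _).tsum_sub (hsy.mul_left _)]
    exact tsum_congr fun k => by simp only [g]; ring
  have hhead : ∑ k ∈ Finset.range 2, g k = (y ^ 2 - x ^ 2) * s 0 + x * y * (y - x) * s 1 := by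
    simp only [g, Finset.sum_range_succ, Finset.sum_range_zero]
    simp only [pow_zero, pow_one, Nat.factorial_zero, Nat.factorial_one, Nat.cast_one, div_one]
    ring
  have htail : ∑' k : ℕ, g (k + 2) ≤ 0 :=
    tsum_nonpos fun k => mul_nonpos_of_nonpos_of_nonneg
      (div_nonpos_of_nonpos_of_nonneg
        (sub_nonpos.mpr (sq_mul_pow_le_sq_mul_pow hx hxy (Nat.le_add_left 2 k))) (by positivity))
      (hs _)
  linarith

theorem decoy_state_lower_bound (mux muy : ℝ) (hx : 0 < mux) (hxy : mux < muy)
    (s : ℕ → ℝ) (hs : ∀ k, s k ∈ Set.Icc (0 : ℝ) 1)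
    (Svx Sxv Svy Syv Svv : ℝ)
    (hSvx : Svx = ∑' k : ℕ, Real.exp (-mux) * mux ^ k / (Nat.factorial k) * s k)
    (hSxv : Sxv = ∑' k : ℕ, Real.exp (-mux) * mux ^ k / (Nat.factorial k) * s k)
    (hSvy : Svy = ∑' k : ℕ, Real.exp (-muy) * muy ^ k / (Nat.factorial k) * s k)
    (hSyv : Syv = ∑' k : ℕ, Real.exp (-muy) * muy ^ k / (Nat.factorial k) * s k)
    (hSvv : Svv = s 0) :
    (muy ^ 2 * Real.exp mux * (Svx + Sxv) - mux ^ 2 * Real.exp muy * (Svy + Syv) -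
        2 * (muy ^ 2 - mux ^ 2) * Svv) / (2 * mux * muy * (muy - mux)) ≤ s 1 := by
  have hbdd : ∀ k, |s k| ≤ 1 := fun k => abs_le.mpr ⟨by linarith [(hs k).1], (hs k).2⟩
  have hcomb := sq_mul_tsum_sub_sq_mul_tsum_le hx.le hxy.le (fun k => (hs k).1)
    (summable_pow_div_factorial_mul_of_abs_le hbdd mux)
    (summable_pow_div_factorial_mul_of_abs_le hbdd muy)
  have hQx := exp_mul_tsum_exp_neg_mul_pow_div_factorial_mul mux s
  have hQy := exp_mul_tsum_exp_neg_mul_pow_div_factorial_mul muy s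
  have hden : 0 < 2 * mux * muy * (muy - mux) := by
    have := sub_pos.mpr hxy
    have := hx.trans hxy
    positivity
  rw [div_le_iff₀ hden, hSvx, hSxv, hSvy, hSyv, hSvv]
  linear_combination 2 * hcomb + 2 * muy ^ 2 * hQx - 2 * mux ^ 2 * hQy
end
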